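/- There exists a constant C > 0 such that for every (q₀,p₀) ∈ [0,1)², every m ∈ ℕ, every n ∈ ℕ and every h ∈ (0,1], setting I₁ = [q₀+m−1, q₀+m+1], I₂ = [q₀+m/2−1, q₀+3m/2+1] \ I₁ and I₃ = ℝ \ (I₁ ∪ I₂): | ∫_{I₃} (F_n^h(x) − L^h(n)(x))·conj(Φ^h_{(q₀+m, p₀+p(m))}(x)) dx | ≤ C·λ^{−n/2}·e^{−m²/(4h)}. -/

import Mathlib

/-!
The integrand is bounded pointwise: `F_n^h` and `L^h(n)` are both bounded by `C(h,n)`, and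
`C(h,n)⁴ = 2 Re(A_n)/h` with `Re(A_n) = (a_n² (1 + γ_n²))⁻¹ ≤ cos⁻⁴θ · λ^{-2n}`, which gives the
factor `λ^{-n/2}`. On `I₃` one has `|x - (q₀ + m)| ≥ m/2`, and since `π > 3` the Gaussian factor
`e^{-π t²/h}` of the wave packet is at most `e^{-m²/(4h)} · e^{-2t²/h}` there. Integrating the
last factor over `ℝ` gives `√(πh/2)`, which cancels the `h^{-1/2}` of the two amplitudes.
-/

open Real Complex MeasureTheory

noncomputable section

/-- Quantized translation `T^h_{(a,b)}`. -/
def Tq (h a b : ℝ) (u : ℝ → ℂ) : ℝ → ℂ := fun x =>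
  Complex.exp ((-(Real.pi * a * b / h) : ℝ) * Complex.I) *
    (Complex.exp ((2 * Real.pi * b * x / h : ℝ) * Complex.I) * u (x - a))

/-- Gaussian wave packet `Φ^h_{(q,p)}`. -/
def WP (h q p : ℝ) : ℝ → ℂ := fun x =>
  (((2 / h) ^ ((1 : ℝ) / 4) : ℝ) : ℂ) *
    (Complex.exp ((2 * Real.pi * p * (x - q) / h : ℝ) * Complex.I) *
      Complex.exp ((-(Real.pi * (x - q) ^ 2 / h) : ℝ) : ℂ))

/-- The L² inner product `⟨f, g⟩ = ∫ f x * conj (g x)`. -/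
def ip (f g : ℝ → ℂ) : ℂ := ∫ x : ℝ, f x * (starRingEnd ℂ) (g x)

/-- The `h`-Fourier transform. -/
def Fh (h : ℝ) (f : ℝ → ℂ) : ℝ → ℂ := fun ξ =>
  ((h : ℂ))⁻¹ * ∫ x : ℝ, Complex.exp ((-(2 * Real.pi * x * ξ / h) : ℝ) * Complex.I) * f x

/-- The metaplectic operator of the matrix `[[a,b],[c,d]]`. -/
def Mhat (h a b c d : ℝ) (f : ℝ → ℂ) : ℝ → ℂ := fun x =>
  ((Real.sqrt a)⁻¹ : ℂ) *
    ∫ ξ : ℝ,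
      Complex.exp ((2 * Real.pi * ((c * x ^ 2 - b * ξ ^ 2 + 2 * x * ξ) / (2 * a)) / h : ℝ) *
        Complex.I) * Fh h f ξ

/-- The large eigenvalue `λ = (3+√5)/2` of the cat map. -/
def lam : ℝ := (3 + Real.sqrt 5) / 2

/-- The angle `θ` of the unstable direction: `tan θ = (√5−1)/2`. -/
def θc : ℝ := Real.arctan ((Real.sqrt 5 - 1) / 2)

/-- entry `a_n` of `Mⁿ`. -/
def an (n : ℕ) : ℝ := Real.cos θc ^ 2 * lam ^ (n : ℤ) + Real.sin θc ^ 2 * lam ^ (-(n : ℤ))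

/-- entry `b_n = c_n` of `Mⁿ`. -/
def bn (n : ℕ) : ℝ := Real.cos θc * Real.sin θc * (lam ^ (n : ℤ) - lam ^ (-(n : ℤ)))

/-- entry `d_n` of `Mⁿ`. -/
def dn (n : ℕ) : ℝ := Real.sin θc ^ 2 * lam ^ (n : ℤ) + Real.cos θc ^ 2 * lam ^ (-(n : ℤ))

/-- `γ_n = b_n / a_n`. -/
def gn (n : ℕ) : ℝ := bn n / an n

/-- `β = (1 + 2i tan θ)/cos² θ`. -/
def βc : ℂ := (1 + 2 * Complex.I * (Real.tan θc : ℂ)) / ((Real.cos θc : ℂ)) ^ 2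

/-- `A_n = (a_n² (1 − i γ_n))⁻¹ − i γ_n`. -/
def An (n : ℕ) : ℂ := (((an n : ℂ)) ^ 2 * (1 - Complex.I * (gn n : ℂ)))⁻¹ - Complex.I * (gn n : ℂ)

/-- The L² normalizing constant `C(h,n)` of the Gaussian `e^{-(π/h) A_n x²}`. -/
def Chn (h : ℝ) (n : ℕ) : ℝ := (2 * (An n).re / h) ^ ((1 : ℝ) / 4)

/-- The propagated wave packet in closed form, `F_n^h`. -/
def Fnh (h : ℝ) (n : ℕ) : ℝ → ℂ := fun x =>
  (Chn h n : ℂ) * Complex.exp (-((Real.pi / h : ℝ) : ℂ) * An n * (x : ℂ) ^ 2)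

/-- The damped Lagrangian state `L^h(n)`. -/
def Lhn (h : ℝ) (n : ℕ) : ℝ → ℂ := fun x =>
  (Chn h n : ℂ) * Complex.exp ((Real.pi * Real.tan θc * x ^ 2 / h : ℝ) * Complex.I) *
    Complex.exp (-((Real.pi : ℝ) : ℂ) * βc * (x : ℂ) ^ 2 / ((h * lam ^ (2 * n) : ℝ) : ℂ))

/-- The metaplectic operator of `Mⁿ`. -/
def MhatN (h : ℝ) (n : ℕ) : (ℝ → ℂ) → (ℝ → ℂ) := Mhat h (an n) (bn n) (bn n) (dn n)

/-- Membership in `D_θ`, the closed `cos(θ)/2`-neighborhood of the line `ξ = tan θ · x`. -/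
def inD (q p : ℝ) : Prop := |q * Real.sin θc - p * Real.cos θc| ≤ Real.cos θc / 2

lemma lam_pos : 0 < lam := by
  unfold lam; positivity

lemma cos_θc_pos : 0 < Real.cos θc :=
  Real.cos_pos_of_mem_Ioo (Real.arctan_mem_Ioo _)

lemma cos_θc_sq_mul_lam_pow_le_an (n : ℕ) : Real.cos θc ^ 2 * lam ^ n ≤ an n := by
  have : 0 ≤ Real.sin θc ^ 2 * lam ^ (-(n : ℤ)) := by have := lam_pos; positivity
  unfold an
  rw [zpow_natCast]
  linarith

lemma an_pos (n : ℕ) : 0 < an n :=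
  lt_of_lt_of_le (by have := cos_θc_pos; have := lam_pos; positivity)
    (cos_θc_sq_mul_lam_pow_le_an n)

lemma An_re_eq (n : ℕ) : (An n).re = (an n ^ 2 * (1 + gn n ^ 2))⁻¹ := by
  set z : ℂ := (an n : ℂ) ^ 2 * (1 - Complex.I * gn n)
  have hre : z.re = an n ^ 2 := by simp [z, ← Complex.ofReal_pow]
  have hnorm : Complex.normSq z = (an n ^ 2) ^ 2 * (1 + gn n ^ 2) := by
    simp only [z, ← Complex.ofReal_pow, Complex.normSq_apply, Complex.mul_re, Complex.mul_im,
      Complex.sub_re, Complex.sub_im, Complex.ofReal_re, Complex.ofReal_im, Complex.one_re,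
      Complex.one_im, Complex.I_re, Complex.I_im]
    ring
  have : 0 < an n := an_pos n
  rw [An, Complex.sub_re, Complex.inv_re, hre, hnorm]
  simp only [Complex.mul_re, Complex.I_re, Complex.I_im, Complex.ofReal_re, Complex.ofReal_im]
  field_simp
  ring

lemma An_re_nonneg (n : ℕ) : 0 ≤ (An n).re := by
  rw [An_re_eq]; positivity

lemma An_re_le (n : ℕ) : (An n).re ≤ (Real.cos θc ^ 4)⁻¹ * lam ^ (-(2 * n : ℝ)) := by
  have hlow := cos_θc_sq_mul_lam_pow_le_an n
  have : 0 < Real.cos θc ^ 2 * lam ^ n := by have := cos_θc_pos; have := lam_pos; positivity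
  calc (An n).re = (an n ^ 2 * (1 + gn n ^ 2))⁻¹ := An_re_eq n
    _ ≤ ((Real.cos θc ^ 2 * lam ^ n) ^ 2)⁻¹ := by
      gcongr
      nlinarith [sq_nonneg (gn n), sq_nonneg (an n)]
    _ = (Real.cos θc ^ 4)⁻¹ * lam ^ (-(2 * n : ℝ)) := by
      rw [Real.rpow_neg lam_pos.le, show (2 * n : ℝ) = ((2 * n : ℕ) : ℝ) by push_cast; ring,
        Real.rpow_natCast]
      ring

lemma four_mul_An_re_rpow_le (n : ℕ) :
    (4 * (An n).re) ^ ((1 : ℝ) / 4) ≤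
      (4 / Real.cos θc ^ 4) ^ ((1 : ℝ) / 4) * lam ^ (-(n : ℝ) / 2) := by
  have := cos_θc_pos
  calc (4 * (An n).re) ^ ((1 : ℝ) / 4)
      ≤ (4 / Real.cos θc ^ 4 * lam ^ (-(2 * n : ℝ))) ^ ((1 : ℝ) / 4) := by
        refine Real.rpow_le_rpow (by linarith [An_re_nonneg n]) ?_ (by norm_num)
        rw [div_eq_mul_inv, mul_assoc]
        exact mul_le_mul_of_nonneg_left (An_re_le n) (by norm_num)
    _ = (4 / Real.cos θc ^ 4) ^ ((1 : ℝ) / 4) * lam ^ (-(n : ℝ) / 2) := by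
        rw [Real.mul_rpow (by positivity) (Real.rpow_nonneg lam_pos.le _),
          ← Real.rpow_mul lam_pos.le]
        ring_nf

lemma Chn_mul_rpow_eq {h : ℝ} (hh : 0 < h) (n : ℕ) :
    Chn h n * (2 / h) ^ ((1 : ℝ) / 4) = (4 * (An n).re) ^ ((1 : ℝ) / 4) / √h := by
  have := An_re_nonneg n
  rw [Chn, ← Real.mul_rpow (by positivity) (by positivity),
    show 2 * (An n).re / h * (2 / h) = 4 * (An n).re / h ^ 2 by field_simp; ring,
    Real.div_rpow (by positivity) (by positivity), Real.sqrt_eq_rpow,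
    ← Real.rpow_natCast, ← Real.rpow_mul hh.le]
  norm_num

lemma Chn_nonneg {h : ℝ} (hh : 0 ≤ h) (n : ℕ) : 0 ≤ Chn h n :=
  Real.rpow_nonneg (div_nonneg (mul_nonneg zero_le_two (An_re_nonneg n)) hh) _

lemma norm_WP {h : ℝ} (hh : 0 < h) (q p x : ℝ) :
    ‖WP h q p x‖ = (2 / h) ^ ((1 : ℝ) / 4) * Real.exp (-(Real.pi * (x - q) ^ 2 / h)) := by
  rw [WP, norm_mul, norm_mul, Complex.norm_exp_ofReal_mul_I, Complex.norm_real,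
    Complex.norm_exp_ofReal, Real.norm_of_nonneg (by positivity), one_mul]

lemma norm_Fnh_le {h : ℝ} (hh : 0 < h) (n : ℕ) (x : ℝ) : ‖Fnh h n x‖ ≤ Chn h n := by
  have hre : (-((Real.pi / h : ℝ) : ℂ) * An n * (x : ℂ) ^ 2).re ≤ 0 := by
    have := An_re_nonneg n
    have : (-((Real.pi / h : ℝ) : ℂ) * An n * (x : ℂ) ^ 2).re =
        -(Real.pi / h * (An n).re * x ^ 2) := by
      simp only [← Complex.ofReal_pow, ← Complex.ofReal_neg, Complex.mul_re, Complex.ofReal_re,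
        Complex.ofReal_im]
      ring
    rw [this, neg_nonpos]
    positivity
  rw [Fnh, norm_mul, Complex.norm_real, Real.norm_of_nonneg (Chn_nonneg hh.le n),
    Complex.norm_exp]
  exact mul_le_of_le_one_right (Chn_nonneg hh.le n) (Real.exp_le_one_iff.mpr hre)

lemma βc_re_nonneg : 0 ≤ βc.re := by
  rw [βc, ← Complex.ofReal_pow, Complex.div_ofReal_re]
  have := cos_θc_pos
  simp only [Complex.add_re, Complex.one_re, Complex.mul_re, Complex.I_re, Complex.I_im,
    Complex.ofReal_re, Complex.ofReal_im]
  norm_num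
  positivity

lemma norm_Lhn_le {h : ℝ} (hh : 0 < h) (n : ℕ) (x : ℝ) : ‖Lhn h n x‖ ≤ Chn h n := by
  have hre : (-((Real.pi : ℝ) : ℂ) * βc * (x : ℂ) ^ 2 / ((h * lam ^ (2 * n) : ℝ) : ℂ)).re ≤ 0 := by
    have := lam_pos
    rw [Complex.div_ofReal_re]
    simp only [← Complex.ofReal_pow, ← Complex.ofReal_neg, Complex.mul_re, Complex.ofReal_re,
      Complex.ofReal_im]
    refine div_nonpos_of_nonpos_of_nonneg ?_ (by positivity)
    nlinarith [mul_nonneg (mul_nonneg Real.pi_pos.le βc_re_nonneg) (sq_nonneg x)]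
  rw [Lhn, norm_mul, norm_mul, Complex.norm_real, Real.norm_of_nonneg (Chn_nonneg hh.le n),
    Complex.norm_exp_ofReal_mul_I, mul_one, Complex.norm_exp]
  exact mul_le_of_le_one_right (Chn_nonneg hh.le n) (Real.exp_le_one_iff.mpr hre)

lemma norm_integrand_le {h : ℝ} (hh : 0 < h) (n : ℕ) (q p x : ℝ) :
    ‖(Fnh h n x - Lhn h n x) * (starRingEnd ℂ) (WP h q p x)‖ ≤
      2 * (4 * (An n).re) ^ ((1 : ℝ) / 4) / √h * Real.exp (-(Real.pi * (x - q) ^ 2 / h)) := by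
  have hFL : ‖Fnh h n x - Lhn h n x‖ ≤ 2 * Chn h n := by
    linarith [norm_sub_le (Fnh h n x) (Lhn h n x), norm_Fnh_le hh n x, norm_Lhn_le hh n x]
  calc ‖(Fnh h n x - Lhn h n x) * (starRingEnd ℂ) (WP h q p x)‖
      ≤ 2 * Chn h n * ((2 / h) ^ ((1 : ℝ) / 4) * Real.exp (-(Real.pi * (x - q) ^ 2 / h))) := by
        rw [norm_mul, RCLike.norm_conj, norm_WP hh]
        gcongr
    _ = 2 * (Chn h n * (2 / h) ^ ((1 : ℝ) / 4)) * Real.exp (-(Real.pi * (x - q) ^ 2 / h)) := by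
        ring
    _ = _ := by rw [Chn_mul_rpow_eq hh]; ring

lemma exp_neg_pi_mul_sq_div_le {a t h : ℝ} (hh : 0 < h) (ha : 0 ≤ a) (hat : a ≤ |t|) :
    Real.exp (-(Real.pi * t ^ 2 / h)) ≤ Real.exp (-(a ^ 2 / h)) * Real.exp (-(2 / h) * t ^ 2) := by
  have hsq : a ^ 2 ≤ t ^ 2 := by simpa using pow_le_pow_left₀ ha hat 2
  have hπ : a ^ 2 + 2 * t ^ 2 ≤ Real.pi * t ^ 2 := by nlinarith [Real.pi_gt_three, sq_nonneg t]
  rw [← Real.exp_add, Real.exp_le_exp]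
  have := div_le_div_of_nonneg_right hπ hh.le
  rw [add_div] at this
  linarith [show 2 / h * t ^ 2 = 2 * t ^ 2 / h by ring]

lemma norm_setIntegral_le_of_norm_le_gaussian {f : ℝ → ℂ} {s : Set ℝ} (hs : MeasurableSet s)
    {M b q : ℝ} (hM : 0 ≤ M) (hb : 0 < b)
    (hf : ∀ x ∈ s, ‖f x‖ ≤ M * Real.exp (-b * (x - q) ^ 2)) :
    ‖∫ x in s, f x‖ ≤ M * √(Real.pi / b) := by
  have hint : Integrable (fun x : ℝ => M * Real.exp (-b * (x - q) ^ 2)) :=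
    ((integrable_exp_neg_mul_sq hb).comp_sub_right q).const_mul M
  calc ‖∫ x in s, f x‖ ≤ ∫ x in s, M * Real.exp (-b * (x - q) ^ 2) :=
        norm_integral_le_of_norm_le hint.restrict ((ae_restrict_iff' hs).mpr (ae_of_all _ hf))
    _ ≤ ∫ x, M * Real.exp (-b * (x - q) ^ 2) :=
        setIntegral_le_integral hint (ae_of_all _ fun x => by positivity)
    _ = M * √(Real.pi / b) := by
        rw [integral_const_mul, integral_sub_right_eq_self (fun x => Real.exp (-b * x ^ 2)) q,
          integral_gaussian]

lemma half_le_abs_sub_of_mem_far {q₀ m x : ℝ}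
    (hx : x ∈ Set.univ \ (Set.Icc (q₀ + m - 1) (q₀ + m + 1) ∪
      (Set.Icc (q₀ + m / 2 - 1) (q₀ + 3 * m / 2 + 1) \ Set.Icc (q₀ + m - 1) (q₀ + m + 1)))) :
    m / 2 ≤ |x - (q₀ + m)| := by
  have hI₂ : x ∉ Set.Icc (q₀ + m / 2 - 1) (q₀ + 3 * m / 2 + 1) := fun hI₂ => by
    by_cases hI₁ : x ∈ Set.Icc (q₀ + m - 1) (q₀ + m + 1)
    · exact hx.2 (Or.inl hI₁)
    · exact hx.2 (Or.inr ⟨hI₂, hI₁⟩)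
  by_contra! hclose
  obtain ⟨hlo, hhi⟩ := abs_lt.mp hclose
  exact hI₂ ⟨by linarith, by linarith⟩

/-- estimate of the contribution of the far interval `I₃`. -/
theorem far_interval_estimate :
    ∃ C : ℝ, 0 < C ∧
      ∀ q₀ p₀ : ℝ, q₀ ∈ Set.Ico (0 : ℝ) 1 → p₀ ∈ Set.Ico (0 : ℝ) 1 →
      ∀ pm : ℕ → ℤ, (∀ m : ℕ, inD (q₀ + m) (p₀ + pm m)) →
      ∀ m n : ℕ, ∀ h : ℝ, 0 < h → h ≤ 1 →
        ‖∫ x in Set.univ \ (Set.Icc (q₀ + m - 1) (q₀ + m + 1) ∪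
            (Set.Icc (q₀ + m / 2 - 1) (q₀ + 3 * m / 2 + 1) \
              Set.Icc (q₀ + m - 1) (q₀ + m + 1))),
          (Fnh h n x - Lhn h n x) * (starRingEnd ℂ) (WP h (q₀ + m) (p₀ + pm m) x)‖ ≤
          C * lam ^ (-(n : ℝ) / 2) * Real.exp (-(m : ℝ) ^ 2 / (4 * h)) := by
  have := cos_θc_pos
  refine ⟨2 * (4 / Real.cos θc ^ 4) ^ ((1 : ℝ) / 4) * √(Real.pi / 2), by positivity, ?_⟩
  intro q₀ p₀ _ _ pm _ m n h hh _
  have := An_re_nonneg n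
  have hsqrt : 0 < √h := Real.sqrt_pos.mpr hh
  refine (norm_setIntegral_le_of_norm_le_gaussian (q := q₀ + m)
    (M := 2 * (4 * (An n).re) ^ ((1 : ℝ) / 4) / √h * Real.exp (-(((m : ℝ) / 2) ^ 2 / h)))
    (by measurability) (by positivity) (div_pos two_pos hh)
    fun x hx => (norm_integrand_le hh n _ _ x).trans ?_).trans ?_
  · exact (mul_le_mul_of_nonneg_left (exp_neg_pi_mul_sq_div_le hh (by positivity)
      (half_le_abs_sub_of_mem_far hx)) (by positivity)).trans_eq (by ring)
  calc _ = 2 * √(Real.pi / 2) * (4 * (An n).re) ^ ((1 : ℝ) / 4) *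
        Real.exp (-(m : ℝ) ^ 2 / (4 * h)) := by
        rw [show Real.pi / (2 / h) = Real.pi / 2 * h by field_simp, Real.sqrt_mul (by positivity)]
        field_simp
        ring_nf
    _ ≤ 2 * √(Real.pi / 2) * ((4 / Real.cos θc ^ 4) ^ ((1 : ℝ) / 4) * lam ^ (-(n : ℝ) / 2)) *
        Real.exp (-(m : ℝ) ^ 2 / (4 * h)) := by
        gcongr
        exact four_mul_An_re_rpow_le n
    _ = _ := by ring
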